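/- arXiv:1910.03095 — 5 statements merged into one kernel-verified Lean document; each statement's English description precedes it below -/
import Mathlib

section
/- Let A, B ∈ M_N(ℂ) be conjugate persymmetric matrices with A invertible. If w ∈ ℂ^N, w ≠ 0, and λ ∈ ℂ satisfy (A⁻¹ B) w = λ w, then the vector J · conj(w) is nonzero and satisfies (A⁻¹ B)(J · conj(w)) = conj(λ) · (J · conj(w)); that is, the reversed conjugate of any eigenvector of A⁻¹B is again an eigenvector of A⁻¹B, with conjugated eigenvalue. -/
open Matrix

/-- If `A, B` are conjugate persymmetric with `A` invertible and
`(A⁻¹ B) w = λ w` for a nonzero `w`, then `J ⬝ conj(w)` is a nonzero eigenvector of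
`A⁻¹ B` with eigenvalue `conj(λ)`. -/
theorem reversed_conj_eigenvector
    (N : ℕ) (J A B : Matrix (Fin N) (Fin N) ℂ)
    (hJ : ∀ m n : Fin N, J m n = if (m : ℕ) + (n : ℕ) = N - 1 then 1 else 0)
    (hAunit : IsUnit A)
    (hA : J * A.map (starRingEnd ℂ) * J = A)
    (hB : J * B.map (starRingEnd ℂ) * J = B)
    (w : Fin N → ℂ) (hw : w ≠ 0) (lam : ℂ)
    (heig : (A⁻¹ * B) *ᵥ w = lam • w) :
    J *ᵥ (star w) ≠ 0 ∧
      (A⁻¹ * B) *ᵥ (J *ᵥ (star w)) = (starRingEnd ℂ lam) • (J *ᵥ (star w)) := by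
  -- J acts on vectors by reversal
  have hJv : ∀ x : Fin N → ℂ, J *ᵥ x = fun i => x i.rev := by
    intro x; funext i
    have hiff : ∀ j : Fin N, ((i : ℕ) + (j : ℕ) = N - 1) ↔ j = i.rev := by
      intro j
      have hi := i.isLt
      have hj := j.isLt
      constructor
      · intro h; apply Fin.ext; simp only [Fin.val_rev]; omega
      · intro h; subst h; simp only [Fin.val_rev]; omega
    simp only [Matrix.mulVec, dotProduct, hJ, hiff]
    simp
  have hJJ : ∀ x : Fin N → ℂ, J *ᵥ (J *ᵥ x) = x := by
    intro x; simp [hJv]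
  -- conjugation and mulVec
  have hmapconj : ∀ (M : Matrix (Fin N) (Fin N) ℂ) (x : Fin N → ℂ),
      (M.map (starRingEnd ℂ)) *ᵥ (star x) = star (M *ᵥ x) := by
    intro M x; funext i
    simp only [Matrix.mulVec, dotProduct, Matrix.map_apply, Pi.star_apply,
      Complex.star_def, map_sum, _root_.map_mul]
  set v := J *ᵥ (star w) with hv
  have hdet : IsUnit A.det := (Matrix.isUnit_iff_isUnit_det A).mp hAunit
  have hAAinv : A * A⁻¹ = 1 := Matrix.mul_nonsing_inv A hdet
  have hAinvA : A⁻¹ * A = 1 := Matrix.nonsing_inv_mul A hdet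
  -- B w = lam • (A *ᵥ w)
  have hBw : B *ᵥ w = lam • (A *ᵥ w) := by
    have h2 : A *ᵥ ((A⁻¹ * B) *ᵥ w) = lam • (A *ᵥ w) := by
      rw [heig, Matrix.mulVec_smul]
    rwa [Matrix.mulVec_mulVec, ← Matrix.mul_assoc, hAAinv, Matrix.one_mul] at h2
  have hJvv : J *ᵥ v = star w := by rw [hv]; exact hJJ _
  clear_value v
  -- persymmetric action: for M with J * M.map conj * J = M, M *ᵥ v = J *ᵥ star (M *ᵥ w)
  have key : ∀ M : Matrix (Fin N) (Fin N) ℂ, J * M.map (starRingEnd ℂ) * J = M →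
      M *ᵥ v = J *ᵥ star (M *ᵥ w) := by
    intro M hM
    have : (J * M.map (starRingEnd ℂ) * J) *ᵥ v = M *ᵥ v := by rw [hM]
    calc M *ᵥ v = (J * M.map (starRingEnd ℂ) * J) *ᵥ v := by rw [hM]
      _ = J *ᵥ (M.map (starRingEnd ℂ) *ᵥ (J *ᵥ v)) := by
          simp [Matrix.mulVec_mulVec, Matrix.mul_assoc]
      _ = J *ᵥ star (M *ᵥ w) := by rw [hJvv, hmapconj]
  have hBv : B *ᵥ v = (starRingEnd ℂ lam) • (A *ᵥ v) := by
    rw [key B hB, key A hA, hBw]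
    have : star (lam • (A *ᵥ w)) = (starRingEnd ℂ lam) • star (A *ᵥ w) := by
      funext i; simp [mul_comm]
    rw [this, Matrix.mulVec_smul]
  constructor
  · intro h
    apply hw
    have h0 : star w = (0 : Fin N → ℂ) := by rw [← hJvv, h, Matrix.mulVec_zero]
    simpa using congrArg star h0
  · calc (A⁻¹ * B) *ᵥ v = A⁻¹ *ᵥ (B *ᵥ v) := by rw [Matrix.mulVec_mulVec]
      _ = (starRingEnd ℂ lam) • (A⁻¹ *ᵥ (A *ᵥ v)) := by rw [hBv, Matrix.mulVec_smul]
      _ = (starRingEnd ℂ lam) • v := by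
          rw [Matrix.mulVec_mulVec, hAinvA, Matrix.one_mulVec]
end

section
/- (Conjugate symmetry of the MaxSINR beamformer for centro-symmetric arrays, general rank signal model.) Let A, B ∈ M_N(ℂ) be Hermitian and conjugate persymmetric, with A positive definite and B positive semidefinite. Let λ ∈ ℝ, and let w ∈ ℂ^N, w ≠ 0, satisfy (A⁻¹ B) w = λ w. Assume the eigenspace {v ∈ ℂ^N : (A⁻¹ B) v = λ v} is one-dimensional. Then there exists c ∈ ℂ with |c| = 1 such that J · conj(w) = c · w; i.e., the optimal weight vector is conjugate symmetric with respect to the array center, up to a unimodular scalar. -/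
/-!
The map `x ↦ J x̄` is a conjugate-linear involution. Conjugate persymmetry of a matrix says that
it commutes with this map, and it is inherited by inverses and products, so it holds for `A⁻¹ B`.
Hence the map sends the eigenspace of the real eigenvalue `λ` to itself; as that eigenspace is the
line through `w`, we get `J w̄ = c w`, and applying the map twice gives `|c|² w = w`.
-/

open Matrix
open scoped ComplexOrder

namespace Matrix

section

variable {n R : Type*} [Fintype n] [CommRing R] [StarRing R]

def IsConjPersymm (J M : Matrix n n R) : Prop :=
  J * M.map (starRingEnd R) * J = M

theorem map_starRingEnd_mulVec_star (M : Matrix n n R) (x : n → R) :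
    M.map (starRingEnd R) *ᵥ star x = star (M *ᵥ x) :=
  funext fun i => (RingHom.map_mulVec (starRingEnd R) M x i).symm

variable [DecidableEq n]

theorem map_starRingEnd_nonsing_inv (A : Matrix n n R) :
    A⁻¹.map (starRingEnd R) = (A.map (starRingEnd R))⁻¹ := by
  -- the entrywise conjugate is `Aᴴᵀ`, and inversion commutes with both `ᴴ` and `ᵀ`
  change A⁻¹ᴴᵀ = Aᴴᵀ⁻¹
  rw [conjTranspose_nonsing_inv, transpose_nonsing_inv]

variable {J : Matrix n n R}

theorem IsConjPersymm.nonsing_inv (hJJ : J * J = 1) {A : Matrix n n R} (hA : IsConjPersymm J A) :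
    IsConjPersymm J A⁻¹ := by
  have hJinv : J⁻¹ = J := inv_eq_left_inv hJJ
  unfold IsConjPersymm at *
  conv_rhs => rw [← hA]
  rw [map_starRingEnd_nonsing_inv, mul_inv_rev, mul_inv_rev, hJinv, Matrix.mul_assoc]

theorem IsConjPersymm.mul (hJJ : J * J = 1) {A B : Matrix n n R} (hA : IsConjPersymm J A)
    (hB : IsConjPersymm J B) : IsConjPersymm J (A * B) := by
  unfold IsConjPersymm at *
  conv_rhs => rw [← hA, ← hB]
  rw [Matrix.map_mul]
  simp only [Matrix.mul_assoc, ← Matrix.mul_assoc J J, hJJ, Matrix.one_mul]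

theorem IsConjPersymm.mulVec_star (hJJ : J * J = 1) {M : Matrix n n R} (hM : IsConjPersymm J M)
    (x : n → R) : J *ᵥ star (M *ᵥ x) = M *ᵥ (J *ᵥ star x) := by
  conv_rhs => rw [← hM]
  rw [← map_starRingEnd_mulVec_star, mulVec_mulVec, mulVec_mulVec, Matrix.mul_assoc _ J J, hJJ,
    Matrix.mul_one]

theorem IsConjPersymm.mulVec_star_of_mulVec_eq_smul (hJJ : J * J = 1) {M : Matrix n n R}
    (hM : IsConjPersymm J M) {μ : R} (hμ : IsSelfAdjoint μ) {x : n → R} (hx : M *ᵥ x = μ • x) :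
    M *ᵥ (J *ᵥ star x) = μ • (J *ᵥ star x) := by
  rw [← hM.mulVec_star hJJ, hx, star_smul, hμ.star_eq, mulVec_smul]

end

theorem norm_eq_one_of_mulVec_star_eq_smul {n 𝕜 : Type*} [Fintype n] [DecidableEq n] [RCLike 𝕜]
    {J : Matrix n n 𝕜} (hJJ : J * J.map (starRingEnd 𝕜) = 1) {w : n → 𝕜} (hw : w ≠ 0) {c : 𝕜}
    (hc : J *ᵥ star w = c • w) : ‖c‖ = 1 := by
  have hcc : (starRingEnd 𝕜 c * c) • w = w := by
    calc (starRingEnd 𝕜 c * c) • w = J *ᵥ star (J *ᵥ star w) := by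
          rw [hc, star_smul, mulVec_smul, hc, smul_smul]; rfl
      _ = w := by rw [← map_starRingEnd_mulVec_star, star_star, mulVec_mulVec, hJJ, one_mulVec]
  have hnorm_sq : ((‖c‖ ^ 2 : ℝ) : 𝕜) = 1 := by
    rw [RCLike.ofReal_pow, ← RCLike.conj_mul]
    exact smul_left_injective 𝕜 hw (hcc.trans (one_smul 𝕜 w).symm)
  exact (pow_eq_one_iff_of_nonneg (norm_nonneg c) two_ne_zero).1 (by exact_mod_cast hnorm_sq)

section Exchange

variable {N : ℕ} {R : Type*} {J : Matrix (Fin N) (Fin N) R}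

theorem exchange_mulVec [NonAssocSemiring R]
    (hJ : ∀ m n : Fin N, J m n = if (m : ℕ) + (n : ℕ) = N - 1 then 1 else 0) (x : Fin N → R) :
    J *ᵥ x = fun m => x m.rev := by
  have hrev : ∀ m n : Fin N, (m : ℕ) + n = N - 1 ↔ n = m.rev := fun m n => by
    rw [Fin.ext_iff, Fin.val_rev]; omega
  funext m
  simp [mulVec, dotProduct, hJ, hrev]

theorem exchange_mul_self [Semiring R]
    (hJ : ∀ m n : Fin N, J m n = if (m : ℕ) + (n : ℕ) = N - 1 then 1 else 0) : J * J = 1 :=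
  ext_iff_mulVec.2 fun x => by simp [← mulVec_mulVec, exchange_mulVec hJ]

theorem exchange_map_starRingEnd [CommRing R] [StarRing R]
    (hJ : ∀ m n : Fin N, J m n = if (m : ℕ) + (n : ℕ) = N - 1 then 1 else 0) :
    J.map (starRingEnd R) = J := by
  ext m n
  rw [map_apply, hJ]
  split_ifs <;> simp

end Exchange

end Matrix

theorem maxsinr_weight_conjugate_symmetric_general
    (N : ℕ) (J A B : Matrix (Fin N) (Fin N) ℂ)
    (hJ : ∀ m n : Fin N, J m n = if (m : ℕ) + (n : ℕ) = N - 1 then 1 else 0)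
    (hAper : J * A.map (starRingEnd ℂ) * J = A)
    (hBper : J * B.map (starRingEnd ℂ) * J = B)
    (lam : ℝ) (w : Fin N → ℂ) (hw : w ≠ 0)
    (heig : (A⁻¹ * B) *ᵥ w = (lam : ℂ) • w)
    (hdim : ∀ v : Fin N → ℂ, (A⁻¹ * B) *ᵥ v = (lam : ℂ) • v → ∃ c : ℂ, v = c • w) :
    ∃ c : ℂ, ‖c‖ = 1 ∧ J *ᵥ (star w) = c • w := by
  have hJJ := exchange_mul_self hJ
  have hper : IsConjPersymm J (A⁻¹ * B) := (IsConjPersymm.nonsing_inv hJJ hAper).mul hJJ hBper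
  obtain ⟨c, hc⟩ := hdim _ (hper.mulVec_star_of_mulVec_eq_smul hJJ (Complex.conj_ofReal lam) heig)
  refine ⟨c, norm_eq_one_of_mulVec_star_eq_smul ?_ hw hc, hc⟩
  rw [exchange_map_starRingEnd hJ, hJJ]

/-- Conjugate symmetry of the MaxSINR beamformer for centro-symmetric
arrays (general rank signal model). If `A, B` are Hermitian conjugate-persymmetric
matrices with `A` positive definite and `B` positive semidefinite, `w ≠ 0` is an
eigenvector of `A⁻¹ B` for the real eigenvalue `λ`, and the `λ`-eigenspace is
one-dimensional (spanned by `w`), then `J ⬝ conj(w) = c ⬝ w` for some unimodular `c`. -/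
theorem maxsinr_weight_conjugate_symmetric
    (N : ℕ) (J A B : Matrix (Fin N) (Fin N) ℂ)
    (hJ : ∀ m n : Fin N, J m n = if (m : ℕ) + (n : ℕ) = N - 1 then 1 else 0)
    (hA : A.PosDef) (hB : B.PosSemidef)
    (hAper : J * A.map (starRingEnd ℂ) * J = A)
    (hBper : J * B.map (starRingEnd ℂ) * J = B)
    (lam : ℝ) (w : Fin N → ℂ) (hw : w ≠ 0)
    (heig : (A⁻¹ * B) *ᵥ w = (lam : ℂ) • w)
    (hdim : ∀ v : Fin N → ℂ, (A⁻¹ * B) *ᵥ v = (lam : ℂ) • v → ∃ c : ℂ, v = c • w) :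
    ∃ c : ℂ, ‖c‖ = 1 ∧ J *ᵥ (star w) = c • w :=
  maxsinr_weight_conjugate_symmetric_general N J A B hJ hAper hBper lam w hw heig hdim
end

section
/- Let A, B ∈ M_N(ℂ) be Hermitian and conjugate persymmetric, with A positive definite and B positive semidefinite. Let λ ∈ ℝ and let w ∈ ℂ^N, w ≠ 0, satisfy (A⁻¹ B) w = λ w, and assume the eigenspace {v : (A⁻¹ B) v = λ v} is one-dimensional. Then there exists a nonzero vector w̃ ∈ ℂ^N with (A⁻¹ B) w̃ = λ w̃ and J · conj(w̃) = w̃; i.e., after a suitable phase rotation the eigenvector can be chosen exactly conjugate symmetric. -/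
open Matrix
open scoped ComplexOrder

/-- Under the hypotheses of Statement 4, after a suitable phase rotation
the eigenvector can be chosen exactly conjugate symmetric: there is a nonzero `w̃` with
`(A⁻¹ B) w̃ = λ w̃` and `J ⬝ conj(w̃) = w̃`. -/
theorem maxsinr_eigenvector_exactly_conjugate_symmetric
    (N : ℕ) (J A B : Matrix (Fin N) (Fin N) ℂ)
    (hJ : ∀ m n : Fin N, J m n = if (m : ℕ) + (n : ℕ) = N - 1 then 1 else 0)
    (hA : A.PosDef) (hB : B.PosSemidef)
    (hAper : J * A.map (starRingEnd ℂ) * J = A)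
    (hBper : J * B.map (starRingEnd ℂ) * J = B)
    (lam : ℝ) (w : Fin N → ℂ) (hw : w ≠ 0)
    (heig : (A⁻¹ * B) *ᵥ w = (lam : ℂ) • w)
    (hdim : ∀ v : Fin N → ℂ, (A⁻¹ * B) *ᵥ v = (lam : ℂ) • v → ∃ c : ℂ, v = c • w) :
    ∃ wt : Fin N → ℂ, wt ≠ 0 ∧ (A⁻¹ * B) *ᵥ wt = (lam : ℂ) • wt ∧
      J *ᵥ (star wt) = wt := by
  -- the reversal permutation
  have hNpos : 0 < N := by
    rcases Nat.eq_zero_or_pos N with h | h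
    · exact absurd (funext fun i => absurd i.isLt (by omega)) hw
    · exact h
  set rev : Fin N → Fin N := fun m => ⟨N - 1 - (m : ℕ), by omega⟩ with hrev
  have hJ' : ∀ m n : Fin N, J m n = if n = rev m then 1 else 0 := by
    intro m n
    rw [hJ]
    have hm := m.isLt
    have hn := n.isLt
    have hiff : ((m : ℕ) + (n : ℕ) = N - 1) ↔ n = rev m := by
      simp only [hrev, Fin.ext_iff]
      omega
    simp [hiff]
  have hJJ : J * J = 1 := by
    ext m n
    simp only [Matrix.mul_apply, hJ']
    rw [Finset.sum_eq_single (rev m)]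
    · have : (n = rev (rev m)) ↔ (m = n) := by
        simp only [hrev, Fin.ext_iff]
        have := m.isLt; have := n.isLt
        constructor <;> (intro h; omega)
      simp [this, Matrix.one_apply, eq_comm]
    · intro k _ hk
      simp [if_neg hk]
    · intro h; exact absurd (Finset.mem_univ _) h
  have hJinv : J⁻¹ = J := Matrix.inv_eq_right_inv hJJ
  -- conjugation of inverse
  have hAdet : IsUnit A.det := hA.det_pos.ne'.isUnit
  have hAinv : A * A⁻¹ = 1 := Matrix.mul_nonsing_inv A hAdet
  have hmapinv : (A⁻¹).map (starRingEnd ℂ) = (A.map (starRingEnd ℂ))⁻¹ := by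
    symm
    apply Matrix.inv_eq_right_inv
    rw [← Matrix.map_mul, hAinv]
    simp [Matrix.map_one]
  -- key matrix identity : J * conj(A⁻¹ B) * J = A⁻¹ B
  have hAinvper : J * (A⁻¹).map (starRingEnd ℂ) * J = A⁻¹ := by
    have : J * (A⁻¹).map (starRingEnd ℂ) * J = (J * A.map (starRingEnd ℂ) * J)⁻¹ := by
      rw [Matrix.mul_inv_rev, Matrix.mul_inv_rev, hJinv, hmapinv, mul_assoc]
    rw [this, hAper]
  have hMper : J * (A⁻¹ * B).map (starRingEnd ℂ) * J = A⁻¹ * B := by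
    calc J * (A⁻¹ * B).map (starRingEnd ℂ) * J
        = (J * (A⁻¹).map (starRingEnd ℂ) * J) * (J * B.map (starRingEnd ℂ) * J) := by
          have h2 : (J * (A⁻¹).map (starRingEnd ℂ) * J) * (J * B.map (starRingEnd ℂ) * J)
              = J * ((A⁻¹).map (starRingEnd ℂ) * B.map (starRingEnd ℂ)) * J := by
            simp only [← mul_assoc]
            rw [mul_assoc (J * (A⁻¹).map (starRingEnd ℂ)) J J, hJJ, mul_one]
          rw [Matrix.map_mul, h2]
      _ = A⁻¹ * B := by rw [hAinvper, hBper]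
  -- conj commutes through map
  have hmapconj : ∀ (X : Matrix (Fin N) (Fin N) ℂ) (v : Fin N → ℂ),
      X.map (starRingEnd ℂ) *ᵥ star v = star (X *ᵥ v) := by
    intro X v
    funext i
    simp only [Matrix.mulVec, dotProduct, Matrix.map_apply, Pi.star_apply]
    rw [show (star (∑ j, X i j * v j) : ℂ) = (starRingEnd ℂ) (∑ j, X i j * v j) from rfl,
      map_sum]
    simp [mul_comm]
  -- J is real
  have hJreal : J.map (starRingEnd ℂ) = J := by
    ext m n
    simp only [Matrix.map_apply, hJ]
    split <;> simp
  have hJstar : ∀ v : Fin N → ℂ, star (J *ᵥ v) = J *ᵥ star v := by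
    intro v
    rw [← hmapconj J v, hJreal]
  -- sigma w is an eigenvector
  have hsig : (A⁻¹ * B) *ᵥ (J *ᵥ star w) = (lam : ℂ) • (J *ᵥ star w) := by
    conv_lhs => rw [← hMper]
    rw [Matrix.mulVec_mulVec, mul_assoc, hJJ, mul_one, ← Matrix.mulVec_mulVec,
      hmapconj, heig]
    have : star ((lam : ℂ) • w) = (lam : ℂ) • star w := by
      funext i
      simp [Complex.conj_ofReal]
    rw [this, Matrix.mulVec_smul]
  obtain ⟨c, hc⟩ := hdim _ hsig
  -- sigma is an involution, so |c| = 1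
  have hinvol : J *ᵥ star (J *ᵥ star w) = w := by
    rw [hJstar, star_star, Matrix.mulVec_mulVec, hJJ, Matrix.one_mulVec]
  have hcc : (starRingEnd ℂ c * c) • w = w := by
    have : J *ᵥ star (c • w) = (starRingEnd ℂ c * c) • w := by
      have h1 : star (c • w) = starRingEnd ℂ c • star w := by
        funext i; simp [mul_comm]
      rw [h1, Matrix.mulVec_smul, hc, smul_smul]
    rw [← this, ← hc, hinvol]
  have hcc1 : starRingEnd ℂ c * c = 1 := by
    have h0 : (starRingEnd ℂ c * c - 1) • w = 0 := by
      rw [sub_smul, one_smul, hcc, sub_self]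
    rcases smul_eq_zero.mp h0 with h | h
    · exact sub_eq_zero.mp h
    · exact absurd h hw
  -- square root of c
  obtain ⟨μ, hμ⟩ := IsAlgClosed.exists_pow_nat_eq c (n := 2) (by norm_num)
  have hnormμ : starRingEnd ℂ μ * μ = 1 := by
    have h2 : (starRingEnd ℂ μ * μ) ^ 2 = 1 := by
      rw [mul_pow, ← map_pow, hμ, hcc1]
    have hreal : ∃ r : ℝ, (starRingEnd ℂ μ * μ) = (r : ℂ) ∧ 0 ≤ r := by
      refine ⟨Complex.normSq μ, ?_, Complex.normSq_nonneg μ⟩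
      rw [mul_comm, Complex.mul_conj]
    obtain ⟨r, hr, hr0⟩ := hreal
    rw [hr] at h2 ⊢
    have : r ^ 2 = 1 := by exact_mod_cast h2
    have : r = 1 := by nlinarith
    rw [this]; norm_num
  have hμne : μ ≠ 0 := by
    intro h
    rw [h] at hnormμ
    simp at hnormμ
  refine ⟨μ • w, ?_, ?_, ?_⟩
  · exact smul_ne_zero hμne hw
  · rw [Matrix.mulVec_smul, heig, smul_comm]
  · have h1 : star (μ • w) = starRingEnd ℂ μ • star w := by
      funext i; simp [mul_comm]
    rw [h1, Matrix.mulVec_smul, hc, smul_smul]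
    have hμc : starRingEnd ℂ μ * c = μ := by
      rw [← hμ, pow_two, ← mul_assoc, hnormμ, one_mul]
    rw [hμc]
end

section
/- (Equivalence of problems (4) and (5).) Let A ∈ M_N(ℂ) be Hermitian positive definite, B ∈ M_N(ℂ) Hermitian positive semidefinite with B ≠ 0, and set R = A + B. Then a vector w₀ ∈ ℂ^N minimizes v ↦ Re(vᴴ R v) over {v : Re(vᴴ B v) ≥ 1} if and only if w₀ satisfies Re(w₀ᴴ B w₀) = 1 and minimizes v ↦ Re(vᴴ A v) over {v : Re(vᴴ B v) = 1}. -/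
open Matrix
open scoped ComplexOrder

lemma quad_real_smul {N : ℕ} (M : Matrix (Fin N) (Fin N) ℂ) (v : Fin N → ℂ) (r : ℝ) :
    (star ((r : ℂ) • v) ⬝ᵥ (M *ᵥ ((r : ℂ) • v))).re
      = r ^ 2 * (star v ⬝ᵥ (M *ᵥ v)).re := by
  simp only [star_smul, smul_dotProduct, mulVec_smul, dotProduct_smul, smul_eq_mul,
    Complex.star_def, Complex.conj_ofReal]
  have : ((r : ℂ) * ((r : ℂ) * (star v ⬝ᵥ M *ᵥ v))) = ((r : ℂ) * r) * (star v ⬝ᵥ M *ᵥ v) := by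
    ring
  rw [this, ← Complex.ofReal_mul, Complex.re_ofReal_mul]
  ring

lemma quad_add {N : ℕ} (A B : Matrix (Fin N) (Fin N) ℂ) (v : Fin N → ℂ) :
    (star v ⬝ᵥ ((A + B) *ᵥ v)).re
      = (star v ⬝ᵥ (A *ᵥ v)).re + (star v ⬝ᵥ (B *ᵥ v)).re := by
  rw [add_mulVec, dotProduct_add, Complex.add_re]

/-- Equivalence of problems (4) and (5). With `R = A + B`, a vector `w₀`
minimizes `Re(vᴴ R v)` over `{v : Re(vᴴ B v) ≥ 1}` iff `Re(w₀ᴴ B w₀) = 1` and `w₀`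
minimizes `Re(vᴴ A v)` over `{v : Re(vᴴ B v) = 1}`. -/
theorem equivalence_of_problems_four_and_five
    (N : ℕ) (A B : Matrix (Fin N) (Fin N) ℂ)
    (hA : A.PosDef) (hB : B.PosSemidef) (hBne : B ≠ 0)
    (R : Matrix (Fin N) (Fin N) ℂ) (hReq : R = A + B)
    (w₀ : Fin N → ℂ) :
    (1 ≤ (star w₀ ⬝ᵥ (B *ᵥ w₀)).re ∧
      ∀ v : Fin N → ℂ, 1 ≤ (star v ⬝ᵥ (B *ᵥ v)).re →
        (star w₀ ⬝ᵥ (R *ᵥ w₀)).re ≤ (star v ⬝ᵥ (R *ᵥ v)).re) ↔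
    ((star w₀ ⬝ᵥ (B *ᵥ w₀)).re = 1 ∧
      ∀ v : Fin N → ℂ, (star v ⬝ᵥ (B *ᵥ v)).re = 1 →
        (star w₀ ⬝ᵥ (A *ᵥ w₀)).re ≤ (star v ⬝ᵥ (A *ᵥ v)).re) := by
  subst hReq
  have hApsd := hA.posSemidef
  constructor
  · rintro ⟨h1, h2⟩
    have hb1 : (star w₀ ⬝ᵥ (B *ᵥ w₀)).re = 1 := by
      by_contra hne
      have hbgt : 1 < (star w₀ ⬝ᵥ (B *ᵥ w₀)).re := lt_of_le_of_ne h1 (Ne.symm hne)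
      set b := (star w₀ ⬝ᵥ (B *ᵥ w₀)).re with hbdef
      have hbpos : 0 < b := by linarith
      set t := (Real.sqrt b)⁻¹ with htdef
      have ht2 : t ^ 2 = b⁻¹ := by
        rw [htdef, inv_pow, Real.sq_sqrt hbpos.le]
      have hfeas : 1 ≤ (star ((t : ℂ) • w₀) ⬝ᵥ (B *ᵥ ((t : ℂ) • w₀))).re := by
        rw [quad_real_smul, ht2, ← hbdef, inv_mul_cancel₀ hbpos.ne']
      have := h2 _ hfeas
      rw [quad_real_smul, ht2] at this
      have hApos : 0 ≤ (star w₀ ⬝ᵥ (A *ᵥ w₀)).re := hApsd.re_dotProduct_nonneg w₀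
      have hR : (star w₀ ⬝ᵥ ((A + B) *ᵥ w₀)).re
          = (star w₀ ⬝ᵥ (A *ᵥ w₀)).re + b := quad_add A B w₀
      have hRpos : 0 < (star w₀ ⬝ᵥ ((A + B) *ᵥ w₀)).re := by rw [hR]; linarith
      have hinv : b⁻¹ < 1 := by
        rw [inv_lt_one_iff₀]; right; exact hbgt
      nlinarith
    refine ⟨hb1, fun v hv => ?_⟩
    have := h2 v hv.ge
    rw [quad_add, quad_add, hb1, hv] at this
    linarith
  · rintro ⟨hb1, hmin⟩
    refine ⟨hb1.ge, fun v hv => ?_⟩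
    set b := (star v ⬝ᵥ (B *ᵥ v)).re with hbdef
    have hbpos : 0 < b := by linarith
    set t := (Real.sqrt b)⁻¹ with htdef
    have ht2 : t ^ 2 = b⁻¹ := by
      rw [htdef, inv_pow, Real.sq_sqrt hbpos.le]
    have hfeas : (star ((t : ℂ) • v) ⬝ᵥ (B *ᵥ ((t : ℂ) • v))).re = 1 := by
      rw [quad_real_smul, ht2, ← hbdef, inv_mul_cancel₀ hbpos.ne']
    have hkey := hmin _ hfeas
    rw [quad_real_smul, ht2] at hkey
    have hAv : 0 ≤ (star v ⬝ᵥ (A *ᵥ v)).re := hApsd.re_dotProduct_nonneg v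
    rw [quad_add, quad_add, hb1, ← hbdef]
    have hinv : b⁻¹ ≤ 1 := by
      rw [inv_le_one_iff₀]; right; exact hv
    nlinarith
end

section
/- (A nested array of P₁ + P₂ sensors spans a filled co-array of aperture P₂(P₁ + 1).) Let P₁, P₂ ≥ 1 be natural numbers and let S = {1, 2, ..., P₁} ∪ { j·(P₁ + 1) : j = 1, 2, ..., P₂ } ⊆ ℕ. Then S has cardinality exactly P₁ + P₂, and for every d ∈ {0, 1, ..., P₂·(P₁ + 1) − 1} there exist a, b ∈ S with a ≥ b and a − b = d; i.e., the difference co-array of the nested array contains every lag from 0 to P₂(P₁ + 1) − 1. -/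
/-- A two-level nested array of `P₁ + P₂` sensors,
`S = {1, …, P₁} ∪ {j (P₁+1) : j = 1, …, P₂}`, has cardinality `P₁ + P₂` and its
difference co-array contains every lag `d ∈ {0, …, P₂(P₁+1) − 1}`. -/
theorem nested_array_filled_coarray
    (P₁ P₂ : ℕ) (h₁ : 1 ≤ P₁) (h₂ : 1 ≤ P₂)
    (S : Finset ℕ)
    (hS : S = Finset.Icc 1 P₁ ∪ (Finset.Icc 1 P₂).image (fun j => j * (P₁ + 1))) :
    S.card = P₁ + P₂ ∧
      ∀ d : ℕ, d < P₂ * (P₁ + 1) → ∃ a ∈ S, ∃ b ∈ S, b ≤ a ∧ a - b = d := by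
  subst hS
  constructor
  · rw [Finset.card_union_of_disjoint, Finset.card_image_of_injOn,
      Nat.card_Icc, Nat.card_Icc]
    · omega
    · intro x _ y _ hxy
      exact Nat.eq_of_mul_eq_mul_right (by omega) hxy
    · rw [Finset.disjoint_left]
      intro x hx hx'
      simp only [Finset.mem_Icc] at hx
      simp only [Finset.mem_image, Finset.mem_Icc] at hx'
      obtain ⟨j, hj, hjx⟩ := hx'
      nlinarith [hj.1, hx.2]
  · intro d hd
    obtain ⟨q, r, hrlt, hqr⟩ : ∃ q r, r < P₁ + 1 ∧ (P₁ + 1) * q + r = d :=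
      ⟨d / (P₁ + 1), d % (P₁ + 1), Nat.mod_lt d (by omega), Nat.div_add_mod d (P₁ + 1)⟩
    have hqlt : q < P₂ := by nlinarith
    have hmul : (q + 1) * (P₁ + 1) = (P₁ + 1) * q + (P₁ + 1) := by ring
    refine ⟨(q + 1) * (P₁ + 1), ?_, (P₁ + 1) - r, ?_, by omega, by omega⟩
    · apply Finset.mem_union_right
      exact Finset.mem_image.mpr ⟨q + 1, Finset.mem_Icc.mpr ⟨by omega, by omega⟩, rfl⟩
    · rcases Nat.eq_zero_or_pos r with hr0 | hr0
      · apply Finset.mem_union_right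
        exact Finset.mem_image.mpr ⟨1, Finset.mem_Icc.mpr ⟨le_refl 1, h₂⟩, by omega⟩
      · exact Finset.mem_union_left _ (Finset.mem_Icc.mpr ⟨by omega, by omega⟩)
end
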